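/- arXiv:math/0402435 — 11 statements merged into one kernel-verified Lean document; each statement's English description precedes it below -/
import Mathlib

section
/- If an affine space A is embedded as a proper affine hyperplane (not containing 0) in a vector space W, then there is a unique linear isomorphism Φ : Â → W from the vector hull of A onto W which restricts to the identity on A. -/
/-- A realization of the *vector hull* `Â` of an affine space `A`. -/
structure VectorHull (K : Type*) [Field K] (V : Type*) [AddCommGroup V] [Module K V]
    (A : Type*) [AddTorsor V A] (W : Type*) [AddCommGroup W] [Module K W] where
  ι : A → W
  j : V →ₗ[K] W
  oneA : W →ₗ[K] K
  ι_injective : Function.Injective ι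
  ι_vadd : ∀ (v : V) (a : A), ι (v +ᵥ a) = j v + ι a
  oneA_ι : ∀ a : A, oneA (ι a) = 1
  ker_oneA : LinearMap.ker oneA = LinearMap.range j
  span_range : Submodule.span K (Set.range ι) = ⊤

/-- If an affine space `A` is embedded (via `ι'`, with linear part `j'`) as a
proper affine hyperplane of a vector space `W'` — i.e. as the level-1 set of a linear
functional `f'`, which in particular does not contain `0` — then there is a unique linear
isomorphism `Φ : Â → W'` from the vector hull onto `W'` restricting to the identity on `A`. -/
theorem stmt_1 {K V A W W' : Type*} [Field K]
    [AddCommGroup V] [Module K V] [AddTorsor V A]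
    [AddCommGroup W] [Module K W] [AddCommGroup W'] [Module K W']
    (H : VectorHull K V A W)
    (ι' : A → W') (j' : V →ₗ[K] W') (f' : W' →ₗ[K] K)
    (hinj : Function.Injective ι')
    (hvadd : ∀ (v : V) (a : A), ι' (v +ᵥ a) = j' v + ι' a)
    (hlevel : Set.range ι' = {w : W' | f' w = 1}) :
    ∃! Φ : W ≃ₗ[K] W', ∀ a : A, Φ (H.ι a) = ι' a := by
  obtain ⟨a₀⟩ := (inferInstance : Nonempty A)
  have hf'ι : ∀ a : A, f' (ι' a) = 1 := fun a => by
    have : ι' a ∈ Set.range ι' := ⟨a, rfl⟩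
    rw [hlevel] at this; exact this
  have hf'j' : ∀ v : V, f' (j' v) = 0 := fun v => by
    have h1 := hf'ι (v +ᵥ a₀)
    rw [hvadd, map_add, hf'ι a₀] at h1
    exact add_eq_right.mp h1
  have hj'inj : Function.Injective j' := by
    rw [injective_iff_map_eq_zero]
    intro v hv
    have : ι' (v +ᵥ a₀) = ι' a₀ := by rw [hvadd, hv, zero_add]
    have := hinj this
    simpa using congrArg (· -ᵥ a₀) this
  have hjinj : Function.Injective H.j := by
    rw [injective_iff_map_eq_zero]
    intro v hv
    have : H.ι (v +ᵥ a₀) = H.ι a₀ := by rw [H.ι_vadd, hv, zero_add]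
    have := H.ι_injective this
    simpa using congrArg (· -ᵥ a₀) this
  set e : V ≃ₗ[K] LinearMap.range H.j := LinearEquiv.ofInjective H.j hjinj with he
  set q : W →ₗ[K] W := LinearMap.id - H.oneA.smulRight (H.ι a₀) with hq
  have hqzero : ∀ w : W, H.oneA w = 0 → q w = w := by
    intro w hw
    simp [hq, hw]
  have hqmem : ∀ w : W, q w ∈ LinearMap.range H.j := by
    intro w
    rw [← H.ker_oneA, LinearMap.mem_ker]
    rw [hq]
    simp [H.oneA_ι, smul_eq_mul]
  set k : W →ₗ[K] LinearMap.range H.j := q.codRestrict _ hqmem with hk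
  set Φ₀ : W →ₗ[K] W' :=
    j' ∘ₗ (e.symm.toLinearMap ∘ₗ k) + H.oneA.smulRight (ι' a₀) with hΦ₀
  have hjker : ∀ v : V, H.oneA (H.j v) = 0 := by
    intro v
    rw [← LinearMap.mem_ker, H.ker_oneA]
    exact ⟨v, rfl⟩
  have hek : ∀ v : V, e.symm (k (H.j v + H.ι a₀)) = v := by
    intro v
    apply e.injective
    rw [e.apply_symm_apply]
    apply Subtype.ext
    show q (H.j v + H.ι a₀) = _
    rw [hq]
    simp only [LinearMap.sub_apply, LinearMap.id_apply, LinearMap.smulRight_apply, map_add,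
      H.oneA_ι, hjker, zero_add, one_smul]
    simp [he, LinearEquiv.ofInjective_apply]
  have key : ∀ a : A, Φ₀ (H.ι a) = ι' a := by
    intro a
    have hdec : H.ι a = H.j (a -ᵥ a₀) + H.ι a₀ := by
      rw [← H.ι_vadd, vsub_vadd]
    rw [hΦ₀]
    simp only [LinearMap.add_apply, LinearMap.coe_comp, LinearEquiv.coe_coe,
      Function.comp_apply, LinearMap.smulRight_apply, H.oneA_ι, one_smul]
    rw [hdec, hek]
    rw [← hvadd, vsub_vadd]
  have hΦ₀f' : ∀ w, f' (Φ₀ w) = H.oneA w := by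
    intro w
    simp [hΦ₀, hf'j', hf'ι]
  have hΦ₀j : ∀ v : V, Φ₀ (H.j v) = j' v := by
    intro v
    have hkv : e.symm (k (H.j v)) = v := by
      apply e.injective
      rw [e.apply_symm_apply]
      apply Subtype.ext
      show q (H.j v) = _
      rw [hqzero _ (hjker v)]
      simp [he, LinearEquiv.ofInjective_apply]
    simp [hΦ₀, hkv, hjker v]
  have hbij : Function.Bijective Φ₀ := by
    constructor
    · rw [injective_iff_map_eq_zero]
      intro w hw
      have h1 : H.oneA w = 0 := by rw [← hΦ₀f' w, hw, map_zero]
      have hwmem : w ∈ LinearMap.range H.j := by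
        rw [← H.ker_oneA]; exact h1
      obtain ⟨v, rfl⟩ := hwmem
      rw [hΦ₀j] at hw
      rw [hj'inj.eq_iff' (map_zero j')] at hw
      rw [hw, map_zero]
    · intro w'
      set u := w' - f' w' • ι' a₀ with hu
      have hfu : f' (u + ι' a₀) = 1 := by simp [hu, hf'ι]
      have : u + ι' a₀ ∈ Set.range ι' := by rw [hlevel]; exact hfu
      obtain ⟨a, ha⟩ := this
      refine ⟨H.ι a - H.ι a₀ + f' w' • H.ι a₀, ?_⟩
      rw [map_add, map_sub, map_smul, key, key, ha, hu]
      abel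
  refine ⟨LinearEquiv.ofBijective Φ₀ hbij, key, ?_⟩
  intro Φ hΦ
  apply LinearEquiv.toLinearMap_injective
  apply LinearMap.ext_on H.span_range
  rintro x ⟨a, rfl⟩
  simp only [LinearEquiv.coe_coe, LinearEquiv.ofBijective_apply]
  rw [hΦ a, key a]
end

section
/- For affine spaces A₁, A₂ over a field K, the vector dual of the affine product satisfies (A₁ ×ᵃ A₂)† ≅ A₁† ⊕ˢᵛ A₂†, where ⊕ˢᵛ denotes the special direct sum of special vector spaces: (V₁, v₁⁰) ⊕ˢᵛ (V₂, v₂⁰) = (V₁ ⊕ V₂ / ⟨v₁⁰ − v₂⁰⟩, [v₁⁰]). -/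
section Aux

variable {K V₁ A₁ V₂ A₂ : Type*} [Field K]
    [AddCommGroup V₁] [Module K V₁] [AddTorsor V₁ A₁]
    [AddCommGroup V₂] [Module K V₂] [AddTorsor V₂ A₂]

/-- The sum map `(φ₁, φ₂) ↦ ((a₁,a₂) ↦ φ₁ a₁ + φ₂ a₂)` as a linear map. -/
noncomputable def sumMap :
    ((A₁ →ᵃ[K] K) × (A₂ →ᵃ[K] K)) →ₗ[K] ((A₁ × A₂) →ᵃ[K] K) where
  toFun p := p.1.comp (AffineMap.fst) + p.2.comp (AffineMap.snd)
  map_add' p q := by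
    ext x
    simp [AffineMap.comp_apply]
    ring
  map_smul' c p := by
    ext x
    simp [AffineMap.comp_apply]

@[simp] lemma sumMap_apply (p : (A₁ →ᵃ[K] K) × (A₂ →ᵃ[K] K)) (x : A₁ × A₂) :
    sumMap p x = p.1 x.1 + p.2 x.2 := by
  simp [sumMap, AffineMap.comp_apply]

/-- Insertion `a₁ ↦ (a₁, b)` as an affine map. -/
def inl (b : A₂) : A₁ →ᵃ[K] (A₁ × A₂) where
  toFun a := (a, b)
  linear := LinearMap.inl K V₁ V₂
  map_vadd' p v := by simp [Prod.ext_iff]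

/-- Insertion `a₂ ↦ (b, a₂)` as an affine map. -/
def inr (b : A₁) : A₂ →ᵃ[K] (A₁ × A₂) where
  toFun a := (b, a)
  linear := LinearMap.inr K V₁ V₂
  map_vadd' p v := by simp [Prod.ext_iff]

end Aux

/-- For affine spaces `A₁, A₂` over a field `K`, the vector dual of the
affine product satisfies `(A₁ ×ᵃ A₂)† ≅ A₁† ⊕ˢᵛ A₂†`, where the special direct sum of the
special vector spaces `(Aᵢ† , 1_{Aᵢ})` is the quotient `(A₁† × A₂†)/⟨(1_{A₁}, -1_{A₂})⟩`
with distinguished vector the class of `(1_{A₁}, 0)`.  The isomorphism sends the class of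
`(φ₁, φ₂)` to the affine function `(a₁, a₂) ↦ φ₁ a₁ + φ₂ a₂` on `A₁ ×ᵃ A₂`, and it sends
the distinguished vector to `1_{A₁ ×ᵃ A₂}`. -/
theorem stmt_5 {K V₁ A₁ V₂ A₂ : Type*} [Field K]
    [AddCommGroup V₁] [Module K V₁] [AddTorsor V₁ A₁]
    [AddCommGroup V₂] [Module K V₂] [AddTorsor V₂ A₂] :
    ∃ e : (((A₁ →ᵃ[K] K) × (A₂ →ᵃ[K] K)) ⧸
        (Submodule.span K
          {((AffineMap.const K A₁ (1 : K), -(AffineMap.const K A₂ (1 : K))) :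
            (A₁ →ᵃ[K] K) × (A₂ →ᵃ[K] K))})) ≃ₗ[K] ((A₁ × A₂) →ᵃ[K] K),
      (∀ (φ₁ : A₁ →ᵃ[K] K) (φ₂ : A₂ →ᵃ[K] K) (p : A₁ × A₂),
        e (Submodule.Quotient.mk (φ₁, φ₂)) p = φ₁ p.1 + φ₂ p.2) ∧
      e (Submodule.Quotient.mk (AffineMap.const K A₁ (1 : K), 0)) =
        AffineMap.const K (A₁ × A₂) (1 : K) := by
  classical
  obtain ⟨a₁⟩ := (inferInstance : Nonempty A₁)
  obtain ⟨a₂⟩ := (inferInstance : Nonempty A₂)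
  set S : Submodule K ((A₁ →ᵃ[K] K) × (A₂ →ᵃ[K] K)) :=
    Submodule.span K
      {((AffineMap.const K A₁ (1 : K), -(AffineMap.const K A₂ (1 : K))) :
        (A₁ →ᵃ[K] K) × (A₂ →ᵃ[K] K))} with hS
  have hker : S ≤ LinearMap.ker (sumMap (K := K) (V₁ := V₁) (A₁ := A₁) (V₂ := V₂) (A₂ := A₂)) := by
    rw [hS, Submodule.span_le]
    rintro x hx
    simp only [Set.mem_singleton_iff] at hx
    subst hx
    simp only [SetLike.mem_coe, LinearMap.mem_ker]
    ext z
    simp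
  set F := Submodule.liftQ S sumMap hker with hF
  have hker' : LinearMap.ker (sumMap (K := K) (V₁ := V₁) (A₁ := A₁) (V₂ := V₂) (A₂ := A₂)) ≤ S := by
    rintro ⟨φ₁, φ₂⟩ h
    simp only [LinearMap.mem_ker] at h
    have hpt : ∀ (x : A₁) (y : A₂), φ₁ x + φ₂ y = 0 := by
      intro x y
      have := congrArg (fun f : (A₁ × A₂) →ᵃ[K] K => f (x, y)) h
      simpa using this
    rw [hS]
    rw [Submodule.mem_span_singleton]
    refine ⟨φ₁ a₁, ?_⟩
    have h1 : φ₁ = (φ₁ a₁) • AffineMap.const K A₁ (1 : K) := by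
      ext x
      have hx := hpt x a₂
      have ha := hpt a₁ a₂
      simp only [AffineMap.coe_smul, Pi.smul_apply, AffineMap.coe_const, Function.const_apply,
        smul_eq_mul, mul_one]
      linear_combination hx - ha
    have h2 : φ₂ = (φ₁ a₁) • -(AffineMap.const K A₂ (1 : K)) := by
      ext y
      have hy := hpt a₁ y
      simp only [AffineMap.coe_smul, AffineMap.coe_neg, Pi.smul_apply, Pi.neg_apply,
        AffineMap.coe_const, Function.const_apply, smul_eq_mul, mul_one, mul_neg]
      linear_combination hy
    rw [Prod.smul_mk] at *
    exact Prod.ext (by rw [← h1]) (by rw [← h2])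
  have hinj : Function.Injective F := by
    rw [hF, ← LinearMap.ker_eq_bot]
    exact Submodule.ker_liftQ_eq_bot S sumMap hker hker'
  have hsurj : Function.Surjective F := by
    intro ψ
    refine ⟨Submodule.Quotient.mk
      (ψ.comp (inl (K := K) (V₁ := V₁) (V₂ := V₂) a₂),
       ψ.comp (inr (K := K) (V₁ := V₁) (V₂ := V₂) a₁) -
         (ψ (a₁, a₂)) • AffineMap.const K A₂ (1 : K)), ?_⟩
    rw [hF]
    rw [Submodule.liftQ_apply]
    ext ⟨x, y⟩
    simp only [sumMap_apply, AffineMap.comp_apply, AffineMap.coe_sub, Pi.sub_apply,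
      AffineMap.coe_smul, Pi.smul_apply, AffineMap.coe_const, Function.const_apply,
      smul_eq_mul, mul_one]
    have hx : (inl (K := K) (V₁ := V₁) (V₂ := V₂) a₂) x = (x, a₂) := rfl
    have hy : (inr (K := K) (V₁ := V₁) (V₂ := V₂) a₁) y = (a₁, y) := rfl
    rw [hx, hy]
    obtain ⟨v, rfl⟩ : ∃ v : V₁, v +ᵥ a₁ = x := ⟨x -ᵥ a₁, vsub_vadd x a₁⟩
    obtain ⟨w, rfl⟩ : ∃ w : V₂, w +ᵥ a₂ = y := ⟨y -ᵥ a₂, vsub_vadd y a₂⟩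
    have e1 : ((v +ᵥ a₁ : A₁), (w +ᵥ a₂ : A₂)) = ((v, w) : V₁ × V₂) +ᵥ (a₁, a₂) := rfl
    have e2 : ((v +ᵥ a₁ : A₁), a₂) = ((v, 0) : V₁ × V₂) +ᵥ (a₁, a₂) := by
      simp [Prod.ext_iff]
    have e3 : (a₁, (w +ᵥ a₂ : A₂)) = ((0, w) : V₁ × V₂) +ᵥ (a₁, a₂) := by
      simp [Prod.ext_iff]
    rw [e1, e2, e3, AffineMap.map_vadd, AffineMap.map_vadd, AffineMap.map_vadd]
    have : ((v, w) : V₁ × V₂) = (v, 0) + (0, w) := by simp [Prod.ext_iff]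
    rw [this, map_add]
    simp only [vadd_eq_add]
    ring
  refine ⟨LinearEquiv.ofBijective F ⟨hinj, hsurj⟩, ?_, ?_⟩
  · intro φ₁ φ₂ p
    show F (Submodule.Quotient.mk (φ₁, φ₂)) p = _
    rw [hF, Submodule.liftQ_apply, sumMap_apply]
  · show F (Submodule.Quotient.mk (AffineMap.const K A₁ (1 : K), 0)) = _
    rw [hF, Submodule.liftQ_apply]
    ext x
    simp
end

section
/- For affine spaces A₁, A₂, there are canonical isomorphisms: the vector hull of A₁ ⊗ᵃ A₂ is Â₁ ⊗ Â₂, and the vector dual satisfies (A₁ ⊗ᵃ A₂)† ≅ A₁† ⊗ A₂†. -/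
open scoped TensorProduct

section Aux

variable {K V A W : Type*} [Field K] [AddCommGroup V] [Module K V] [AddTorsor V A]
  [AddCommGroup W] [Module K W]

-- W is finitely generated: W = range j + K • ι a₀
theorem VectorHull.finite (H : VectorHull K V A W) [FiniteDimensional K V] :
    FiniteDimensional K W := by
  obtain ⟨a₀⟩ := (inferInstance : Nonempty A)
  let f : (V × K) →ₗ[K] W :=
    H.j.comp (LinearMap.fst K V K) + (LinearMap.toSpanSingleton K W (H.ι a₀)).comp (LinearMap.snd K V K)
  have hsurj : Function.Surjective f := by
    intro w
    have h1 : H.oneA (w - H.oneA w • H.ι a₀) = 0 := by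
      simp [H.oneA_ι a₀, mul_one]
    rw [← LinearMap.mem_ker, H.ker_oneA] at h1
    obtain ⟨v, hv⟩ := h1
    refine ⟨(v, H.oneA w), ?_⟩
    simp only [f, LinearMap.add_apply, LinearMap.comp_apply, LinearMap.fst_apply,
      LinearMap.snd_apply, LinearMap.toSpanSingleton_apply, hv]
    abel
  exact Module.Finite.of_surjective f hsurj

theorem VectorHull.j_injective (H : VectorHull K V A W) : Function.Injective H.j := by
  obtain ⟨a₀⟩ := (inferInstance : Nonempty A)
  intro v v' h
  have : H.ι (v +ᵥ a₀) = H.ι (v' +ᵥ a₀) := by rw [H.ι_vadd, H.ι_vadd, h]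
  have := H.ι_injective this
  exact vadd_right_cancel a₀ this

/-- The natural map `Dual W → (A →ᵃ K)`, `f ↦ f ∘ ι`. -/
noncomputable def VectorHull.dualToAff (H : VectorHull K V A W) :
    Module.Dual K W →ₗ[K] (A →ᵃ[K] K) where
  toFun f := { toFun := fun a => f (H.ι a), linear := f.comp H.j,
               map_vadd' := fun a v => by simp [H.ι_vadd, vadd_eq_add] }
  map_add' f g := by ext a; simp
  map_smul' c f := by ext a; simp

@[simp] theorem VectorHull.dualToAff_apply (H : VectorHull K V A W)
    (f : Module.Dual K W) (a : A) : H.dualToAff f a = f (H.ι a) := rfl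

theorem VectorHull.dualToAff_bijective (H : VectorHull K V A W) :
    Function.Bijective H.dualToAff := by
  obtain ⟨a₀⟩ := (inferInstance : Nonempty A)
  constructor
  · rw [← LinearMap.ker_eq_bot, LinearMap.ker_eq_bot']
    intro f hf
    have hval : ∀ a : A, f (H.ι a) = 0 := fun a => congrFun (congrArg AffineMap.toFun hf) a
    ext w
    have hw : w ∈ Submodule.span K (Set.range H.ι) := H.span_range ▸ Submodule.mem_top
    induction hw using Submodule.span_induction with
    | mem x hx => obtain ⟨a, rfl⟩ := hx; simp [hval]
    | zero => simp
    | add x y _ _ hx hy => simp [hx, hy]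
    | smul c x _ hx => simp [hx]
  · intro φ
    -- build a dual vector extending φ
    let e : V ≃ₗ[K] LinearMap.range H.j := LinearEquiv.ofInjective H.j H.j_injective
    let P : W →ₗ[K] W := LinearMap.id - (LinearMap.toSpanSingleton K W (H.ι a₀)).comp H.oneA
    have hP : ∀ w, P w ∈ LinearMap.range H.j := by
      intro w
      rw [← H.ker_oneA, LinearMap.mem_ker]
      simp [P, H.oneA_ι a₀, mul_one]
    let P' : W →ₗ[K] LinearMap.range H.j := P.codRestrict _ hP
    let f : Module.Dual K W :=
      φ.linear.comp ((e.symm : LinearMap.range H.j →ₗ[K] V).comp P') + (φ a₀) • H.oneA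
    refine ⟨f, ?_⟩
    ext a
    have hPa : P (H.ι a) = H.j (a -ᵥ a₀) := by
      have h0 : H.oneA (H.j (a -ᵥ a₀)) = 0 :=
        LinearMap.mem_ker.mp (H.ker_oneA ▸ LinearMap.mem_range_self H.j (a -ᵥ a₀))
      have := H.ι_vadd (a -ᵥ a₀) a₀
      rw [vsub_vadd] at this
      simp [P, this, h0, H.oneA_ι]
    have he : e.symm ⟨H.j (a -ᵥ a₀), LinearMap.mem_range_self _ _⟩ = a -ᵥ a₀ := by
      apply H.j_injective
      have : (e (a -ᵥ a₀) : W) = H.j (a -ᵥ a₀) := rfl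
      rw [show (⟨H.j (a -ᵥ a₀), LinearMap.mem_range_self _ _⟩ : LinearMap.range H.j)
        = e (a -ᵥ a₀) from Subtype.ext this.symm, LinearEquiv.symm_apply_apply]
    have hP'a : P' (H.ι a) = ⟨H.j (a -ᵥ a₀), LinearMap.mem_range_self _ _⟩ :=
      Subtype.ext hPa
    simp only [VectorHull.dualToAff_apply, f, LinearMap.add_apply, LinearMap.comp_apply,
      LinearMap.smul_apply, LinearEquiv.coe_coe, hP'a, he, H.oneA_ι a, smul_eq_mul, mul_one]
    have := φ.map_vadd a₀ (a -ᵥ a₀)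
    rw [vsub_vadd] at this
    rw [this]; simp [vadd_eq_add, add_comm]

/-- `A† ≃ Dual Â`. -/
noncomputable def VectorHull.affDualEquiv (H : VectorHull K V A W) :
    (A →ᵃ[K] K) ≃ₗ[K] Module.Dual K W :=
  (LinearEquiv.ofBijective H.dualToAff H.dualToAff_bijective).symm

@[simp] theorem VectorHull.affDualEquiv_apply (H : VectorHull K V A W)
    (φ : A →ᵃ[K] K) (a : A) : H.affDualEquiv φ (H.ι a) = φ a := by
  have : H.dualToAff (H.affDualEquiv φ) = φ :=
    (LinearEquiv.ofBijective H.dualToAff H.dualToAff_bijective).apply_symm_apply φ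
  calc H.affDualEquiv φ (H.ι a) = H.dualToAff (H.affDualEquiv φ) a := rfl
    _ = φ a := by rw [this]

end Aux


/-- For (finite-dimensional) affine spaces `A₁, A₂`:
(a) the vector hull of the affine tensor product `A₁ ⊗ᵃ A₂` is `Â₁ ⊗ Â₂`, i.e. the
decomposable tensors `ι a₁ ⊗ ι a₂` with `aᵢ ∈ Aᵢ` linearly span `Â₁ ⊗ Â₂`;
(b) the vector dual satisfies `(A₁ ⊗ᵃ A₂)† ≅ A₁† ⊗ A₂†`: there is a linear isomorphism
of `A₁† ⊗ A₂†` onto the dual of the hull `Â₁ ⊗ Â₂` (which is `(A₁ ⊗ᵃ A₂)†` by (a) and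
Theorem `Aff(A, K) ≅ Â*`), determined canonically by
`(φ₁ ⊗ φ₂)(a₁ ⊗ a₂) = φ₁(a₁) · φ₂(a₂)`. -/
theorem stmt_7 {K V₁ A₁ W₁ V₂ A₂ W₂ : Type*} [Field K]
    [AddCommGroup V₁] [Module K V₁] [AddTorsor V₁ A₁]
    [AddCommGroup W₁] [Module K W₁]
    [AddCommGroup V₂] [Module K V₂] [AddTorsor V₂ A₂]
    [AddCommGroup W₂] [Module K W₂]
    [FiniteDimensional K V₁] [FiniteDimensional K V₂]
    (H₁ : VectorHull K V₁ A₁ W₁) (H₂ : VectorHull K V₂ A₂ W₂) :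
    (Submodule.span K
        {w : W₁ ⊗[K] W₂ | ∃ (a₁ : A₁) (a₂ : A₂), w = H₁.ι a₁ ⊗ₜ[K] H₂.ι a₂} = ⊤) ∧
    (∃ e : ((A₁ →ᵃ[K] K) ⊗[K] (A₂ →ᵃ[K] K)) ≃ₗ[K] Module.Dual K (W₁ ⊗[K] W₂),
      ∀ (φ₁ : A₁ →ᵃ[K] K) (φ₂ : A₂ →ᵃ[K] K) (a₁ : A₁) (a₂ : A₂),
        e (φ₁ ⊗ₜ[K] φ₂) (H₁.ι a₁ ⊗ₜ[K] H₂.ι a₂) = φ₁ a₁ * φ₂ a₂) := by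
  haveI : FiniteDimensional K W₁ := H₁.finite
  haveI : FiniteDimensional K W₂ := H₂.finite
  constructor
  · rw [eq_top_iff, ← TensorProduct.span_tmul_eq_top K W₁ W₂, Submodule.span_le]
    rintro _ ⟨m, n, rfl⟩
    have hm : m ∈ Submodule.span K (Set.range H₁.ι) := H₁.span_range ▸ Submodule.mem_top
    have hn : n ∈ Submodule.span K (Set.range H₂.ι) := H₂.span_range ▸ Submodule.mem_top
    induction hm using Submodule.span_induction with
    | mem x hx =>
      induction hn using Submodule.span_induction with
      | mem y hy =>
        obtain ⟨a₁, rfl⟩ := hx; obtain ⟨a₂, rfl⟩ := hy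
        exact Submodule.subset_span ⟨a₁, a₂, rfl⟩
      | zero => simp
      | add y z _ _ hy hz =>
        rw [TensorProduct.tmul_add]; exact Submodule.add_mem _ hy hz
      | smul c y _ hy =>
        rw [TensorProduct.tmul_smul]; exact Submodule.smul_mem _ c hy
    | zero => simp
    | add x y _ _ hx hy =>
      rw [TensorProduct.add_tmul]; exact Submodule.add_mem _ hx hy
    | smul c x _ hx =>
      rw [← TensorProduct.smul_tmul']; exact Submodule.smul_mem _ c hx
  · refine ⟨(TensorProduct.congr H₁.affDualEquiv H₂.affDualEquiv).trans
      (TensorProduct.dualDistribEquiv K W₁ W₂), fun φ₁ φ₂ a₁ a₂ => ?_⟩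
    simp only [LinearEquiv.trans_apply, TensorProduct.congr_tmul,
      TensorProduct.dualDistribEquiv, TensorProduct.dualDistribEquivOfBasis_apply_apply,
      TensorProduct.homTensorHomMap_apply, TensorProduct.map_tmul, TensorProduct.lid_tmul,
      smul_eq_mul, VectorHull.affDualEquiv_apply]
end

section
/- For k > 1, the affine exterior power ⋀ᵃᵏ A of an affine space A, defined as the quotient of the affine tensor power A^{⊗ᵃ k} by the affine subspace A₀ᵏ spanned by decomposable tensors with two equal entries, is canonically isomorphic to the ordinary exterior power ⋀ᵏ Â of the vector hull; equivalently, the linear span in ⋀ᵏ Â of the wedges a₁ ∧ ⋯ ∧ a_k with aᵢ ∈ A is all of ⋀ᵏ Â. -/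
/-- For `k > 1`, the affine exterior power `⋀ᵃᵏ A` of an affine space `A`
(the quotient of the affine tensor power by the subspace spanned by tensors with two equal
entries) is canonically the full exterior power `⋀ᵏ Â` of the vector hull; equivalently,
the wedges `a₁ ∧ ⋯ ∧ a_k` of points `aᵢ ∈ A` linearly span all of `⋀ᵏ Â`. -/
theorem stmt_8 {K V A W : Type*} [Field K]
    [AddCommGroup V] [Module K V] [AddTorsor V A]
    [AddCommGroup W] [Module K W]
    (H : VectorHull K V A W) {k : ℕ} (hk : 1 < k) :
    Submodule.span K
        (Set.range fun a : Fin k → A =>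
          ExteriorAlgebra.ιMulti K k (fun i => H.ι (a i))) =
      ⋀[K]^k W := by
  rw [← ExteriorAlgebra.ιMulti_span_fixedDegree]
  refine le_antisymm (Submodule.span_mono ?_) (Submodule.span_le.2 ?_)
  · rintro _ ⟨a, rfl⟩
    exact ⟨fun i => H.ι (a i), rfl⟩
  · rintro _ ⟨w, rfl⟩
    have hw : ∀ i : Fin k, ∃ c : W →₀ K, ↑c.support ⊆ Set.range H.ι ∧
        (c.sum fun x r => r • x) = w i := by
      intro i
      exact Submodule.mem_span_set.mp (H.span_range ▸ Submodule.mem_top :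
        w i ∈ Submodule.span K (Set.range H.ι))
    choose c hc1 hc2 using hw
    have hsum : (ExteriorAlgebra.ιMulti K k) w =
        ∑ r ∈ Fintype.piFinset (fun i => (c i).support),
          (∏ i, c i (r i)) • ExteriorAlgebra.ιMulti K k r := by
      have hw' : w = fun i => ∑ x ∈ (c i).support, c i x • x := by
        funext i
        rw [← hc2 i]; rfl
      rw [hw']
      rw [show ((ExteriorAlgebra.ιMulti K k : AlternatingMap K W _ (Fin k))
        fun i => ∑ x ∈ (c i).support, c i x • x) =
        (ExteriorAlgebra.ιMulti K k).toMultilinearMap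
          (fun i => ∑ x ∈ (c i).support, (fun i x => c i x • x) i x) from rfl]
      rw [MultilinearMap.map_sum_finset]
      refine Finset.sum_congr rfl fun r _ => ?_
      exact (ExteriorAlgebra.ιMulti K k).toMultilinearMap.map_smul_univ
        (fun i => c i (r i)) r
    rw [hsum]
    refine Submodule.sum_mem _ fun r hr => Submodule.smul_mem _ _ ?_
    have hri : ∀ i, ∃ a : A, H.ι a = r i := fun i =>
      hc1 i (Finset.mem_coe.mpr ((Fintype.mem_piFinset.mp hr) i))
    choose a ha using hri
    refine Submodule.subset_span ⟨a, ?_⟩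
    simp only [ha]
end

section
/- For an affine space A over K, its specialization S_A = (A ×ᵃ I, (0,1)) satisfies S_A^# ≅ A† as special vector spaces, where A† = Aff(A, K) carries distinguished vector 1_A: the isomorphism sends φ ∈ Aff(A × K, K) with linear part mapping (0,1) to 1 to the function a ↦ φ(a, 0), and it maps φ + 1_{S_A} to φ† + 1_A. -/
/-- The canonical affine inclusion `A → A × K`, `a ↦ (a, 0)`. -/
def inclZero (K : Type*) [Field K] {V A : Type*} [AddCommGroup V] [Module K V]
    [AddTorsor V A] : A →ᵃ[K] A × K where
  toFun a := (a, (0 : K))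
  linear := LinearMap.inl K V K
  map_vadd' p v := by
    ext
    · simp
    · simp

/-- For an affine space `A` over `K`, the specialization
`S_A = (A ×ᵃ I, (0,1))` satisfies `S_A^# ≅ A†` as special vector spaces: the map sending a
special affine map `φ : A × K → K` (i.e. an affine map whose linear part maps `(0,1)` to `1`)
to the affine function `a ↦ φ(a, 0)` is a bijection onto `A† = Aff(A, K)`, and it maps
`φ + 1_{S_A}` to `φ† + 1_A`. -/
theorem stmt_11 {K V A : Type*} [Field K] [AddCommGroup V] [Module K V] [AddTorsor V A] :
    Function.Bijective
        (fun φ : {φ : (A × K) →ᵃ[K] K // φ.linear ((0 : V), (1 : K)) = 1} =>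
          φ.1.comp (inclZero K)) ∧
      ∀ φ : {φ : (A × K) →ᵃ[K] K // φ.linear ((0 : V), (1 : K)) = 1},
        (⟨φ.1 + AffineMap.const K (A × K) (1 : K), by
            simp [AffineMap.add_linear, AffineMap.const_linear, φ.2]⟩ :
          {φ : (A × K) →ᵃ[K] K // φ.linear ((0 : V), (1 : K)) = 1}).1.comp (inclZero K) =
          φ.1.comp (inclZero K) + AffineMap.const K A (1 : K) := by
  constructor
  · constructor
    · rintro ⟨φ₁, h₁⟩ ⟨φ₂, h₂⟩ h
      ext ⟨a, t⟩
      have key : ∀ a : A, ∀ t : K, φ₁ (a, t) = φ₁ (a, 0) + t * φ₁.linear (0, 1) := by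
        intro a t
        have : (a, t) = ((0 : V), t) +ᵥ (a, (0 : K)) := by simp [Prod.ext_iff]
        rw [this, AffineMap.map_vadd]
        have : ((0 : V), t) = t • ((0 : V), (1 : K)) := by simp
        rw [this, map_smul]
        simp [smul_eq_mul, add_comm]
      have hfun : ∀ a : A, φ₁ (a, 0) = φ₂ (a, 0) := fun a =>
        congrFun (congrArg (fun f => (AffineMap.toFun f)) h) a
      rw [key a t]
      have key2 : ∀ a : A, ∀ t : K, φ₂ (a, t) = φ₂ (a, 0) + t * φ₂.linear (0, 1) := by
        intro a t
        have : (a, t) = ((0 : V), t) +ᵥ (a, (0 : K)) := by simp [Prod.ext_iff]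
        rw [this, AffineMap.map_vadd]
        have : ((0 : V), t) = t • ((0 : V), (1 : K)) := by simp
        rw [this, map_smul]
        simp [smul_eq_mul, add_comm]
      rw [key2 a t, hfun a, h₁, h₂]
    · intro ψ
      refine ⟨⟨ψ.comp (AffineMap.fst) + (AffineMap.snd : (A × K) →ᵃ[K] K), ?_⟩, ?_⟩
      · simp [AffineMap.add_linear, AffineMap.comp, AffineMap.fst, AffineMap.snd]
      · ext a
        simp [inclZero, AffineMap.comp]
  · intro φ
    ext a
    simp [AffineMap.comp, inclZero]
end

section
/- Let Z = (Z, v⁰) be a 1-dimensional special affine space over K modelled on I = (K,1) (a space of affine scalars). The map F : Z → Aff(Z, K) given by F_σ(σ′) = σ − σ′ is an isomorphism of Z onto the special affine dual of the adjoint space Z̄, and it extends by linearity to an isomorphism of special vector spaces F : Ẑ → Z† between the vector hull of Z and the vector dual Z† = Aff(Z, K). -/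
/-- On a space of affine scalars `Z` (a `1`-dimensional affine space modelled on `K`), the
affine function `F_σ : σ′ ↦ σ − σ′`. -/
def Fmap (K : Type*) [Field K] (Z : Type*) [AddTorsor K Z] (σ : Z) : Z →ᵃ[K] K where
  toFun τ := σ -ᵥ τ
  linear := -LinearMap.id
  map_vadd' p v := by
    simp only [vsub_vadd_eq_vsub_sub, LinearMap.neg_apply, LinearMap.id_apply,
      vadd_eq_add]
    ring

/-- Let `Z` be a space of affine scalars (a `1`-dimensional special affine
space modelled on `I = (K, 1)`).  The map `F : σ ↦ F_σ`, `F_σ(σ′) = σ − σ′`, is an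
isomorphism of `Z` onto the special affine dual `Z̄^#` of the adjoint space
(the affine functions `φ` with `φ_v(1) = −1`), and it extends by linearity to an isomorphism
of special vector spaces `F : Ẑ → Z† = Aff(Z, K)` sending the distinguished vector
`1 ∈ K = V(Z) ⊂ Ẑ` to `1_Z`. -/
theorem stmt_12 {K Z W : Type*} [Field K] [AddTorsor K Z]
    [AddCommGroup W] [Module K W] (H : VectorHull K K Z W) :
    ∃ e : W ≃ₗ[K] (Z →ᵃ[K] K),
      (∀ σ : Z, e (H.ι σ) = Fmap K Z σ) ∧
      e (H.j 1) = AffineMap.const K Z (1 : K) ∧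
      (∀ σ : Z, (Fmap K Z σ).linear 1 = -1) ∧
      (∀ φ : Z →ᵃ[K] K, φ.linear 1 = -1 → ∃! σ : Z, Fmap K Z σ = φ) := by
  obtain ⟨σ₀⟩ : Nonempty Z := inferInstance
  set M : (Z →ᵃ[K] K) →ₗ[K] W :=
    { toFun := fun φ => (-(φ.linear 1)) • H.ι σ₀ + H.j (φ σ₀)
      map_add' := fun φ ψ => by
        simp [add_smul, neg_add, map_add]
        abel
      map_smul' := fun c φ => by
        simp only [AffineMap.coe_smul, Pi.smul_apply, AffineMap.smul_linear,
          LinearMap.smul_apply, smul_eq_mul, ← H.j.map_smul, smul_add, smul_smul,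
          RingHom.id_apply, mul_neg, neg_smul, smul_neg] } with hM
  have hMF : ∀ σ : Z, M (Fmap K Z σ) = H.ι σ := by
    intro σ
    have h1 : H.j (σ -ᵥ σ₀) + H.ι σ₀ = H.ι σ := by
      rw [← H.ι_vadd]; rw [vsub_vadd]
    show (-(Fmap K Z σ).linear 1) • H.ι σ₀ + H.j (Fmap K Z σ σ₀) = H.ι σ
    have h2 : (Fmap K Z σ).linear 1 = -1 := by simp [Fmap]
    have h3 : Fmap K Z σ σ₀ = σ -ᵥ σ₀ := rfl
    rw [h2, h3, neg_neg, one_smul, add_comm, h1]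
  have hMc : M (AffineMap.const K Z (1 : K)) = H.j 1 := by
    simp [hM]
  have hlin : ∀ (f : K →ₗ[K] K) (x : K), f x = x * f 1 := by
    intro f x
    have := f.map_smul x 1
    simpa [smul_eq_mul] using this
  have hinjj : Function.Injective H.j := by
    intro a b hab
    have : H.ι (a +ᵥ σ₀) = H.ι (b +ᵥ σ₀) := by rw [H.ι_vadd, H.ι_vadd, hab]
    exact vadd_right_cancel σ₀ (H.ι_injective this)
  have hMinj : Function.Injective M := by
    rw [injective_iff_map_eq_zero]
    intro φ hφ
    have h0 : (-(φ.linear 1)) • H.ι σ₀ + H.j (φ σ₀) = 0 := hφ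
    have hone : H.oneA ((-(φ.linear 1)) • H.ι σ₀ + H.j (φ σ₀)) = -(φ.linear 1) := by
      have hjk : H.oneA (H.j (φ σ₀)) = 0 := by
        have : H.j (φ σ₀) ∈ LinearMap.ker H.oneA := by
          rw [H.ker_oneA]; exact ⟨φ σ₀, rfl⟩
        simpa using this
      simp [map_add, map_smul, H.oneA_ι, hjk]
    rw [h0, map_zero] at hone
    have hl1 : φ.linear 1 = 0 := by
      have := hone.symm
      rwa [neg_eq_zero] at this
    have hv0 : φ σ₀ = 0 := by
      rw [hl1, neg_zero, zero_smul, zero_add] at h0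
      have : H.j (φ σ₀) = H.j 0 := by rw [map_zero]; exact h0
      exact hinjj this
    ext τ
    have hτ : τ = (τ -ᵥ σ₀) +ᵥ σ₀ := (vsub_vadd τ σ₀).symm
    rw [hτ, φ.map_vadd]
    simp [hlin φ.linear (τ -ᵥ σ₀), hl1, hv0]
  have hMsurj : Function.Surjective M := by
    rw [← LinearMap.range_eq_top]
    rw [← top_le_iff, ← H.span_range, Submodule.span_le]
    rintro w ⟨σ, rfl⟩
    exact ⟨Fmap K Z σ, hMF σ⟩
  set eE := LinearEquiv.ofBijective M ⟨hMinj, hMsurj⟩ with heE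
  refine ⟨eE.symm, ?_, ?_, ?_, ?_⟩
  · intro σ
    rw [← hMF σ]
    exact eE.symm_apply_apply (Fmap K Z σ)
  · rw [← hMc]
    exact eE.symm_apply_apply _
  · intro σ; simp [Fmap]
  · intro φ hφ
    refine ⟨(φ σ₀) +ᵥ σ₀, ?_, ?_⟩
    · ext τ
      have hτ : τ = (τ -ᵥ σ₀) +ᵥ σ₀ := (vsub_vadd τ σ₀).symm
      have h1 : Fmap K Z ((φ σ₀) +ᵥ σ₀) τ = φ σ₀ - (τ -ᵥ σ₀) := by
        show ((φ σ₀) +ᵥ σ₀) -ᵥ τ = _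
        rw [vadd_vsub_assoc]
        have : σ₀ -ᵥ τ = -(τ -ᵥ σ₀) := by rw [neg_vsub_eq_vsub_rev]
        rw [this]; ring
      rw [h1]
      conv_rhs => rw [hτ]
      rw [φ.map_vadd]
      rw [hlin φ.linear (τ -ᵥ σ₀), hφ]
      simp [sub_eq_add_neg]
      ring
    · intro σ hσ
      have : Fmap K Z σ σ = φ σ := by rw [hσ]
      have h0 : (0 : K) = φ σ := by
        simpa [Fmap] using this
      have h2 : Fmap K Z ((φ σ₀) +ᵥ σ₀) σ = φ σ := by
        have := congrArg (fun ψ : Z →ᵃ[K] K => ψ σ)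
          (show Fmap K Z ((φ σ₀) +ᵥ σ₀) = φ from ?_)
        · exact this
        · ext τ
          have hτ : τ = (τ -ᵥ σ₀) +ᵥ σ₀ := (vsub_vadd τ σ₀).symm
          have h1 : Fmap K Z ((φ σ₀) +ᵥ σ₀) τ = φ σ₀ - (τ -ᵥ σ₀) := by
            show ((φ σ₀) +ᵥ σ₀) -ᵥ τ = _
            rw [vadd_vsub_assoc]
            have : σ₀ -ᵥ τ = -(τ -ᵥ σ₀) := by rw [neg_vsub_eq_vsub_rev]
            rw [this]; ring
          rw [h1]
          conv_rhs => rw [hτ]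
          rw [φ.map_vadd, hlin φ.linear (τ -ᵥ σ₀), hφ]
          simp [sub_eq_add_neg]; ring
      have h3 : ((φ σ₀) +ᵥ σ₀ : Z) -ᵥ σ = (0 : K) := by
        have : Fmap K Z ((φ σ₀) +ᵥ σ₀) σ = ((φ σ₀) +ᵥ σ₀ : Z) -ᵥ σ := rfl
        rw [← this, h2, ← h0]
      exact (vsub_eq_zero_iff_eq.mp h3).symm
end

section
/- On a space of affine scalars Z over K with bracket {f, g}_Z = f X_Z(g) − g X_Z(f), for every affine function φ ∈ Z† = Aff(Z, K) and every element u of the vector hull Ẑ, one has {φ, F_u}_Z = ⟨φ, u⟩, where F : Ẑ → Z† is the canonical isomorphism extending σ ↦ (σ′ ↦ σ − σ′) and ⟨·,·⟩ is the canonical pairing of Z† = Ẑ* with Ẑ. -/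
/-- The canonical bracket `{f, g}_Z = f·X_Z(g) − g·X_Z(f)` of affine functions on a space of
affine scalars `Z`, where `X_Z(f) = −f_v(1)` (i.e. `X_Z = −∂_s` in a global coordinate). -/
def avBracket (K : Type*) [Field K] (Z : Type*) [AddTorsor K Z]
    (f g : Z →ᵃ[K] K) : Z → K :=
  fun τ => f τ * (-(g.linear 1)) - g τ * (-(f.linear 1))

/-- On a space of affine scalars `Z` over `K`, for every affine function
`φ ∈ Z† = Aff(Z, K)` and every element `u` of the vector hull `Ẑ`,
`{φ, F_u}_Z = ⟨φ, u⟩`: here `e : Ẑ → Z†` is the linear extension of `σ ↦ F_σ`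
(`F_σ(τ) = σ − τ`), and the pairing `⟨φ, u⟩` is realized by the canonical identification
`ext : Z† ≅ Ẑ*` of affine functions with functionals on the hull (`ext φ (ι σ) = φ σ`). -/
theorem stmt_14 {K Z W : Type*} [Field K] [AddTorsor K Z]
    [AddCommGroup W] [Module K W] (H : VectorHull K K Z W)
    (e : W →ₗ[K] (Z →ᵃ[K] K)) (he : ∀ σ : Z, e (H.ι σ) = Fmap K Z σ)
    (ext : (Z →ᵃ[K] K) →ₗ[K] Module.Dual K W)
    (hext : ∀ (φ : Z →ᵃ[K] K) (σ : Z), ext φ (H.ι σ) = φ σ) :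
    ∀ (φ : Z →ᵃ[K] K) (u : W) (τ : Z),
      avBracket K Z φ (e u) τ = ext φ u := by
  intro φ u τ
  have hu : u ∈ Submodule.span K (Set.range H.ι) := by
    rw [H.span_range]; trivial
  induction hu using Submodule.span_induction with
  | mem x hx =>
    obtain ⟨σ, rfl⟩ := hx
    rw [he, hext]
    simp only [avBracket, Fmap, AffineMap.coe_mk, LinearMap.neg_apply, LinearMap.id_apply,
      neg_neg]
    have h1 : φ σ = φ ((σ -ᵥ τ) +ᵥ τ) := by rw [vsub_vadd]
    have h2 : φ.linear (σ -ᵥ τ) = (σ -ᵥ τ) * φ.linear 1 := by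
      rw [← smul_eq_mul, ← map_smul, smul_eq_mul, mul_one]
    rw [h1, AffineMap.map_vadd, h2, vadd_eq_add]
    ring
  | zero => simp [avBracket]
  | add x y _ _ hx hy =>
    simp only [map_add, LinearMap.add_apply] at *
    simp only [avBracket, AffineMap.add_linear, AffineMap.coe_add, Pi.add_apply, LinearMap.add_apply] at *
    rw [← hx, ← hy]; ring
  | smul c x _ hx =>
    simp only [map_smul, LinearMap.smul_apply, smul_eq_mul] at *
    simp only [avBracket, AffineMap.smul_linear, AffineMap.coe_smul, Pi.smul_apply, LinearMap.smul_apply,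
      smul_eq_mul] at *
    rw [← hx]; ring
end

section
/- On the polynomial algebra of a space of affine scalars Z over K, the bracket {f, g}_Z = f X_Z(g) − g X_Z(f) is a Jacobi bracket: it is bilinear, skew-symmetric, satisfies the Jacobi identity, and is a first-order bidifferential operator; in particular, the bracket of two affine functions is a constant, since X_Z({φ, ψ}_Z) = 0 whenever X_Z²(φ) = X_Z²(ψ) = 0. -/
open Polynomial

/-- The canonical derivation `X_Z = −∂_s` on the polynomial algebra of a space of affine
scalars, in a global affine coordinate `s`. -/
noncomputable def XZpoly {K : Type*} [Field K] (f : K[X]) : K[X] :=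
  -Polynomial.derivative f

/-- The canonical bracket `{f, g}_Z = f·X_Z(g) − g·X_Z(f)` on the polynomial algebra. -/
noncomputable def polyBracket {K : Type*} [Field K] (f g : K[X]) : K[X] :=
  f * XZpoly g - g * XZpoly f

/-- On the polynomial algebra of a space of affine scalars `Z` over `K`
(identified with `K[s]` via a global affine coordinate, with `X_Z = −∂_s`), the bracket
`{f, g}_Z = f·X_Z(g) − g·X_Z(f)` is a Jacobi bracket: it is bilinear, skew-symmetric,
satisfies the Jacobi identity, and is a first-order bidifferential operator; in particular
the bracket of two affine functions is a constant, since `X_Z({f, g}) = 0` whenever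
`X_Z²(f) = X_Z²(g) = 0`. -/
theorem stmt_16 (K : Type*) [Field K] :
    (∀ f₁ f₂ g : K[X], polyBracket (f₁ + f₂) g = polyBracket f₁ g + polyBracket f₂ g) ∧
    (∀ (c : K) (f g : K[X]), polyBracket (c • f) g = c • polyBracket f g) ∧
    (∀ f g₁ g₂ : K[X], polyBracket f (g₁ + g₂) = polyBracket f g₁ + polyBracket f g₂) ∧
    (∀ (c : K) (f g : K[X]), polyBracket f (c • g) = c • polyBracket f g) ∧
    (∀ f g : K[X], polyBracket f g = -polyBracket g f) ∧
    (∀ f g h : K[X],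
      polyBracket f (polyBracket g h) + polyBracket g (polyBracket h f) +
        polyBracket h (polyBracket f g) = 0) ∧
    (∀ f g h : K[X],
      polyBracket (f * g) h =
        f * polyBracket g h + g * polyBracket f h - f * g * polyBracket 1 h) ∧
    (∀ f g : K[X], XZpoly (XZpoly f) = 0 → XZpoly (XZpoly g) = 0 →
      XZpoly (polyBracket f g) = 0) := by
  refine ⟨?_, ?_, ?_, ?_, ?_, ?_, ?_, ?_⟩
  · intro f₁ f₂ g; simp [polyBracket, XZpoly]; ring
  · intro c f g; simp [polyBracket, XZpoly, smul_sub, smul_mul_assoc]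
  · intro f g₁ g₂; simp [polyBracket, XZpoly]; ring
  · intro c f g; simp [polyBracket, XZpoly, smul_sub, mul_smul_comm]
  · intro f g; unfold polyBracket; ring
  · intro f g h; simp [polyBracket, XZpoly, derivative_mul]; ring
  · intro f g h; simp [polyBracket, XZpoly, derivative_mul]; ring
  · intro f g hf hg
    simp only [polyBracket, XZpoly, map_sub, derivative_mul, map_neg, neg_eq_zero] at *
    rw [hf, hg]; ring
end

section
/- Let E be a Lie algebroid over M of rank > 1 and let X₀ be a nowhere-vanishing section generating a Lie ideal (i.e. [Sec(E), X₀] ⊂ C∞(M)·X₀). Then the anchor ρ(X₀) = 0, and there is a section φ_{X₀} of E* with [Y, X₀] = ⟨Y, φ_{X₀}⟩ X₀ for all sections Y; moreover φ_{X₀} is a closed 1-form for the Lie algebroid differential, i.e. ⟨[Y₁, Y₂], φ_{X₀}⟩ = ρ(Y₁)⟨Y₂, φ_{X₀}⟩ − ρ(Y₂)⟨Y₁, φ_{X₀}⟩. -/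
/-- An algebraic model of (the sections of) a Lie algebroid: a Lie–Rinehart algebra.
`R` plays the role of `C∞(M)`, `L` of the space of sections of `E`, and `anchor` of the
anchor map `ρ` acting on functions. -/
structure LieRinehartAlg (K R L : Type*) [CommRing K] [CommRing R] [Algebra K R]
    [LieRing L] [LieAlgebra K L] [Module R L] where
  anchor : L → (R →ₗ[K] R)
  anchor_add : ∀ X Y : L, anchor (X + Y) = anchor X + anchor Y
  anchor_smul : ∀ (f : R) (X : L) (g : R), anchor (f • X) g = f * anchor X g
  anchor_deriv : ∀ (X : L) (f g : R), anchor X (f * g) = f * anchor X g + g * anchor X f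
  anchor_bracket : ∀ (X Y : L) (f : R),
    anchor ⁅X, Y⁆ f = anchor X (anchor Y f) - anchor Y (anchor X f)
  leibniz_rule : ∀ (X : L) (f : R) (Y : L), ⁅X, f • Y⁆ = f • ⁅X, Y⁆ + (anchor X f) • Y

/-!
The Leibniz rule gives `ρ(X₀)(f) • Y = [X₀, f • Y] - f • [X₀, Y]`, and the right-hand side lies
in the line `R ∙ X₀` because `X₀` generates an ideal; since `E` has rank `> 1` this forces
`ρ(X₀) = 0`. Then `Y ↦ [Y, X₀]` is `R`-linear with values in `R ∙ X₀`, and as `X₀` vanishes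
nowhere its coefficient `φ(Y)` is a well-defined `R`-linear form. Closedness of `φ` is the
Jacobi identity `[[Y₁, Y₂], X₀] = [Y₁, [Y₂, X₀]] - [Y₂, [Y₁, X₀]]` expanded by the Leibniz rule.
-/

namespace LieRinehartAlg

variable {K R L : Type*} [CommRing K] [CommRing R] [Algebra K R]
  [LieRing L] [LieAlgebra K L] [Module R L] (P : LieRinehartAlg K R L)

theorem anchor_apply_smul_eq_lie_sub (X Y : L) (f : R) :
    P.anchor X f • Y = ⁅X, f • Y⁆ - f • ⁅X, Y⁆ := by
  rw [P.leibniz_rule, add_sub_cancel_left]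

theorem anchor_eq_zero_of_lie_mem_span {X₀ : L} (h_ideal : ∀ Y : L, ⁅Y, X₀⁆ ∈ R ∙ X₀)
    (h_rank : ∀ f : R, (∀ Y : L, f • Y ∈ R ∙ X₀) → f = 0) :
    P.anchor X₀ = 0 := by
  have lie_mem : ∀ Y : L, ⁅X₀, Y⁆ ∈ R ∙ X₀ := fun Y => by
    rw [← lie_skew]
    exact neg_mem (h_ideal Y)
  ext f
  refine h_rank _ fun Y => ?_
  rw [P.anchor_apply_smul_eq_lie_sub]
  exact sub_mem (lie_mem _) (Submodule.smul_mem _ f (lie_mem Y))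

theorem smul_lie_of_anchor_eq_zero {X : L} (hX : P.anchor X = 0) (f : R) (Y : L) :
    ⁅f • Y, X⁆ = f • ⁅Y, X⁆ := by
  rw [← lie_skew, P.leibniz_rule, hX, LinearMap.zero_apply, zero_smul, add_zero, ← smul_neg,
    lie_skew]

theorem lie_lie_eq_smul {X₀ : L} {φ : L → R} (hφ : ∀ Y : L, ⁅Y, X₀⁆ = φ Y • X₀) (Y₁ Y₂ : L) :
    ⁅⁅Y₁, Y₂⁆, X₀⁆ = (P.anchor Y₁ (φ Y₂) - P.anchor Y₂ (φ Y₁)) • X₀ := by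
  rw [lie_lie, hφ Y₂, hφ Y₁, P.leibniz_rule, P.leibniz_rule, hφ Y₁, hφ Y₂, smul_smul, smul_smul,
    mul_comm (φ Y₂), sub_smul]
  abel

end LieRinehartAlg

/-- "Nowhere vanishing" is encoded by `f • X₀ = 0 → f = 0`, and "rank > 1" by: no nonzero
function `f` can push every section into the line spanned by `X₀`. -/
theorem stmt_17 {K R L : Type*} [CommRing K] [CommRing R] [Algebra K R]
    [LieRing L] [LieAlgebra K L] [Module R L]
    (P : LieRinehartAlg K R L) (X₀ : L)
    (h_nonvanishing : ∀ f : R, f • X₀ = 0 → f = 0)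
    (h_ideal : ∀ Y : L, ∃ f : R, ⁅Y, X₀⁆ = f • X₀)
    (h_rank : ∀ f : R, (∀ Y : L, ∃ g : R, f • Y = g • X₀) → f = 0) :
    P.anchor X₀ = 0 ∧
    ∃ φ : L → R,
      (∀ (f : R) (Y : L), φ (f • Y) = f * φ Y) ∧
      (∀ Y Y' : L, φ (Y + Y') = φ Y + φ Y') ∧
      (∀ Y : L, ⁅Y, X₀⁆ = φ Y • X₀) ∧
      (∀ Y₁ Y₂ : L, φ ⁅Y₁, Y₂⁆ = P.anchor Y₁ (φ Y₂) - P.anchor Y₂ (φ Y₁)) := by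
  have mem_span_iff : ∀ Z : L, Z ∈ R ∙ X₀ ↔ ∃ g : R, Z = g • X₀ := fun Z => by
    simp only [Submodule.mem_span_singleton, eq_comm]
  have hanchor : P.anchor X₀ = 0 :=
    P.anchor_eq_zero_of_lie_mem_span (fun Y => (mem_span_iff _).2 (h_ideal Y))
      fun f hf => h_rank f fun Y => (mem_span_iff _).1 (hf Y)
  have hX₀ : Function.Injective (LinearMap.toSpanSingleton R L X₀) :=
    (injective_iff_map_eq_zero _).2 h_nonvanishing
  choose φ hφ using h_ideal
  refine ⟨hanchor, φ, fun f Y => hX₀ ?_, fun Y Y' => hX₀ ?_, hφ, fun Y₁ Y₂ => hX₀ ?_⟩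
  · simp only [LinearMap.toSpanSingleton_apply, ← hφ, P.smul_lie_of_anchor_eq_zero hanchor,
      mul_smul]
  · simp only [LinearMap.toSpanSingleton_apply, ← hφ, add_lie, add_smul]
  · simp only [LinearMap.toSpanSingleton_apply, ← hφ, P.lie_lie_eq_smul hφ]
end

section
/- On the space V ⊕ K with bracket [(X, β), (X′, β′)] = ([X, X′], D_X β′ − D_{X′} β) (the Lie algebroid of sections model) and central element c = (0,1), a bivector Λ = Λ₀ + c ∧ X₀ with Λ₀ ∈ ⋀² V and X₀ ∈ V satisfies the Schouten equation [[Λ, Λ]] = 0 if and only if [[Λ₀, Λ₀]] = 0 and [[Λ₀, X₀]] = 0, since [[Λ, Λ]] = [[Λ₀, Λ₀]] − 2 c ∧ [[Λ₀, X₀]]. -/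
/-- The Lie bracket of the Lie algebra `g = V ⊕ K` (sections model): on `L × R`,
`[(X, β), (X′, β′)] = ([X, X′], D_X β′ − D_{X′} β)`, where `D` is the action of `L` on `R`
by first-order operators. -/
def gBr {K L R : Type*} [Field K] [LieRing L] [LieAlgebra K L]
    [CommRing R] [Algebra K R] (D : L →ₗ[K] (R →ₗ[K] R)) :
    L × R → L × R → L × R :=
  fun p q => (⁅p.1, q.1⁆, D p.1 q.2 - D q.1 p.2)

set_option maxHeartbeats 2000000 in
/-- Let `g = L ⊕ R` carry the bracket
`[(X, β), (X′, β′)] = ([X, X′], D_X β′ − D_{X′} β)` with central element `c = (0, 1)`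
(so `D_X 1 = 0`), and let `Sch` be the Schouten–Nijenhuis bracket on the exterior algebra of
`g` (a bilinear operation characterized on decomposables in degrees `(2,2)` and `(2,1)` by
the usual biderivation formulas extending the Lie bracket).  Then a bivector
`Λ = Λ₀ + c ∧ X₀`, with `Λ₀ ∈ ⋀² L` and `X₀ ∈ L`, satisfies
`[[Λ, Λ]] = [[Λ₀, Λ₀]] − 2 c ∧ [[Λ₀, X₀]]`; in particular the Schouten equation
`[[Λ, Λ]] = 0` holds if and only if `[[Λ₀, Λ₀]] = 0` and `[[Λ₀, X₀]] = 0`. -/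
theorem stmt_18 {K L R : Type*} [Field K] [CharZero K]
    [LieRing L] [LieAlgebra K L] [CommRing R] [Algebra K R] [Nontrivial R]
    (D : L →ₗ[K] (R →ₗ[K] R))
    (hD : ∀ X Y : L, D ⁅X, Y⁆ = D X ∘ₗ D Y - D Y ∘ₗ D X)
    (hD1 : ∀ X : L, D X (1 : R) = 0)
    (Sch : ExteriorAlgebra K (L × R) →ₗ[K]
      ExteriorAlgebra K (L × R) →ₗ[K] ExteriorAlgebra K (L × R))
    (hb22 : ∀ x y z w : L × R,
      Sch (ExteriorAlgebra.ι K x * ExteriorAlgebra.ι K y)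
          (ExteriorAlgebra.ι K z * ExteriorAlgebra.ι K w) =
        ExteriorAlgebra.ι K (gBr D x z) * ExteriorAlgebra.ι K y * ExteriorAlgebra.ι K w
        - ExteriorAlgebra.ι K (gBr D x w) * ExteriorAlgebra.ι K y * ExteriorAlgebra.ι K z
        - ExteriorAlgebra.ι K (gBr D y z) * ExteriorAlgebra.ι K x * ExteriorAlgebra.ι K w
        + ExteriorAlgebra.ι K (gBr D y w) * ExteriorAlgebra.ι K x * ExteriorAlgebra.ι K z)
    (hb21 : ∀ x y z : L × R,
      Sch (ExteriorAlgebra.ι K x * ExteriorAlgebra.ι K y) (ExteriorAlgebra.ι K z) =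
        ExteriorAlgebra.ι K (gBr D x z) * ExteriorAlgebra.ι K y
        + ExteriorAlgebra.ι K x * ExteriorAlgebra.ι K (gBr D y z))
    (Λ₀ : ExteriorAlgebra K (L × R))
    (hΛ₀ : Λ₀ ∈ Submodule.span K
      {u : ExteriorAlgebra K (L × R) | ∃ x y : L,
        u = ExteriorAlgebra.ι K ((x, 0) : L × R) * ExteriorAlgebra.ι K ((y, 0) : L × R)})
    (X₀ : L) :
    (Sch (Λ₀ + ExteriorAlgebra.ι K (((0 : L), (1 : R)) : L × R) *
            ExteriorAlgebra.ι K ((X₀, 0) : L × R))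
        (Λ₀ + ExteriorAlgebra.ι K (((0 : L), (1 : R)) : L × R) *
            ExteriorAlgebra.ι K ((X₀, 0) : L × R)) =
      Sch Λ₀ Λ₀ - (2 : K) • (ExteriorAlgebra.ι K (((0 : L), (1 : R)) : L × R) *
        Sch Λ₀ (ExteriorAlgebra.ι K ((X₀, 0) : L × R)))) ∧
    (Sch (Λ₀ + ExteriorAlgebra.ι K (((0 : L), (1 : R)) : L × R) *
            ExteriorAlgebra.ι K ((X₀, 0) : L × R))
        (Λ₀ + ExteriorAlgebra.ι K (((0 : L), (1 : R)) : L × R) *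
            ExteriorAlgebra.ι K ((X₀, 0) : L × R)) = 0 ↔
      (Sch Λ₀ Λ₀ = 0 ∧ Sch Λ₀ (ExteriorAlgebra.ι K ((X₀, 0) : L × R)) = 0)) := by
  classical
  set I := (ExteriorAlgebra.ι K : L × R →ₗ[K] ExteriorAlgebra K (L × R)) with hI
  have hswap : ∀ a b : L × R, I a * I b = -(I b * I a) := fun a b =>
    eq_neg_of_add_eq_zero_left (ExteriorAlgebra.ι_add_mul_swap a b)
  have move3 : ∀ a b m : L × R, I a * I b * I m = I m * (I a * I b) := by
    intro a b m
    rw [mul_assoc, hswap b m, mul_neg, ← mul_assoc, hswap a m, neg_mul, neg_neg, mul_assoc]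
  have move1 : ∀ a m b : L × R, I a * I m * I b = -(I m * (I a * I b)) := by
    intro a m b
    rw [hswap a m, neg_mul, mul_assoc]
  have hgc : ∀ q : L × R, gBr D ((0 : L), (1 : R)) q = 0 := by
    intro q; simp [gBr, hD1, Prod.ext_iff]
  have hgc' : ∀ p : L × R, gBr D p ((0 : L), (1 : R)) = 0 := by
    intro p; simp [gBr, hD1, Prod.ext_iff]
  have hg0 : ∀ x y : L, gBr D (x, (0 : R)) (y, (0 : R)) = (⁅x, y⁆, (0 : R)) := by
    intro x y; simp [gBr]
  set c := I ((0 : L), (1 : R)) with hcdef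
  set e := I ((X₀ : L), (0 : R)) with hedef
  have hIneg : ∀ a : L, I (-a, (0 : R)) = -I (a, (0 : R)) := by
    intro a
    rw [show ((-a, (0 : R)) : L × R) = -((a, (0 : R)) : L × R) by simp [Prod.ext_iff], map_neg]
  have h1 : Sch (c * e) (c * e) = 0 := by
    rw [hcdef, hedef, hb22]
    simp [hgc, hgc', hg0, Prod.mk_zero_zero]
  have hcomm : ∀ x y : L,
      Sch (I (x, (0 : R)) * I (y, (0 : R))) (c * e) =
        -(c * Sch (I (x, (0 : R)) * I (y, (0 : R))) e) ∧
      Sch (c * e) (I (x, (0 : R)) * I (y, (0 : R))) =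
        -(c * Sch (I (x, (0 : R)) * I (y, (0 : R))) e) := by
    intro x y
    have hbr : Sch (I (x, (0 : R)) * I (y, (0 : R))) e =
        I (⁅x, X₀⁆, (0 : R)) * I (y, (0 : R)) + I (x, (0 : R)) * I (⁅y, X₀⁆, (0 : R)) := by
      rw [hedef, hb21, hg0, hg0]
    constructor
    · rw [hbr, hcdef, hedef, hb22]
      simp only [hgc', hg0, map_zero, zero_mul, zero_sub, sub_zero, zero_add, add_zero]
      rw [move3, move3, hswap (⁅y, X₀⁆, (0 : R)) ((x : L), (0 : R))]
      simp only [mul_neg, mul_add]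
      abel
    · rw [hbr, hcdef, hedef, hb22]
      simp only [hgc, hg0, map_zero, zero_mul, zero_sub, sub_zero, zero_add, add_zero]
      rw [← lie_skew X₀ x, ← lie_skew X₀ y, hIneg, hIneg]
      simp only [neg_mul, neg_neg]
      rw [move1 (⁅x, X₀⁆, (0 : R)) ((0 : L), (1 : R)) ((y : L), (0 : R)),
        move1 (⁅y, X₀⁆, (0 : R)) ((0 : L), (1 : R)) ((x : L), (0 : R)),
        hswap (⁅y, X₀⁆, (0 : R)) ((x : L), (0 : R))]
      simp only [mul_neg, neg_neg, mul_add]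
      abel
  have h2 : ∀ u ∈ Submodule.span K
      {u : ExteriorAlgebra K (L × R) | ∃ x y : L, u = I (x, (0 : R)) * I (y, (0 : R))},
      Sch u (c * e) = -(c * Sch u e) ∧ Sch (c * e) u = -(c * Sch u e) := by
    intro u hu
    induction hu using Submodule.span_induction with
    | mem u hu => obtain ⟨x, y, rfl⟩ := hu; exact hcomm x y
    | zero => simp
    | add u v _ _ hu hv =>
      constructor <;>
        simp only [map_add, LinearMap.add_apply, hu.1, hu.2, hv.1, hv.2, mul_add, neg_add]
    | smul a u _ hu =>
      constructor <;>
        simp only [map_smul, LinearMap.smul_apply, hu.1, hu.2, mul_smul_comm, smul_neg]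
  have h2' := h2 Λ₀ hΛ₀
  have hexp : Sch (Λ₀ + c * e) (Λ₀ + c * e) = Sch Λ₀ Λ₀ - (2 : K) • (c * Sch Λ₀ e) := by
    simp only [map_add, LinearMap.add_apply]
    rw [h1, h2'.1, h2'.2, two_smul]
    abel
  refine ⟨hexp, ?_⟩
  rw [hexp]
  constructor
  · intro h
    -- build a contraction annihilating everything but the `c` factor
    have hker : LinearMap.ker (Algebra.linearMap K R) = ⊥ := by
      rw [LinearMap.ker_eq_bot]
      exact fun a b hab => (algebraMap K R).injective hab
    obtain ⟨g, hg⟩ := (Algebra.linearMap K R).exists_leftInverse_of_injective hker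
    have hg1 : g 1 = 1 := by simpa using LinearMap.congr_fun hg 1
    set φ : L × R →ₗ[K] K := g ∘ₗ LinearMap.snd K L R with hφdef
    have hφc : φ ((0 : L), (1 : R)) = 1 := by simpa [hφdef] using hg1
    have hφ0 : ∀ a : L, φ (a, (0 : R)) = 0 := by intro a; simp [hφdef]
    set d : ExteriorAlgebra K (L × R) →ₗ[K] ExteriorAlgebra K (L × R) :=
      CliffordAlgebra.contractLeft (Q := (0 : QuadraticForm K (L × R))) φ with hddef
    have dmul : ∀ (a : L × R) (b : ExteriorAlgebra K (L × R)),
        d (I a * b) = φ a • b - I a * d b := by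
      intro a b
      rw [hddef, hI]
      exact CliffordAlgebra.contractLeft_ι_mul (Q := (0 : QuadraticForm K (L × R))) φ a b
    have dι : ∀ a : L × R, d (I a) = algebraMap K _ (φ a) := by
      intro a
      rw [hddef, hI]
      exact CliffordAlgebra.contractLeft_ι (0 : QuadraticForm K (L × R)) φ a
    have d2 : ∀ a b : L, d (I (a, (0 : R)) * I (b, (0 : R))) = 0 := by
      intro a b
      rw [dmul, dι, hφ0, hφ0]
      simp
    have d3 : ∀ a b m : L, d (I (a, (0 : R)) * I (b, (0 : R)) * I (m, (0 : R))) = 0 := by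
      intro a b m
      rw [mul_assoc, dmul, hφ0, d2]
      simp
    have dB : ∀ u ∈ Submodule.span K
        {u : ExteriorAlgebra K (L × R) | ∃ x y : L, u = I (x, (0 : R)) * I (y, (0 : R))},
        d (Sch u e) = 0 := by
      intro u hu
      induction hu using Submodule.span_induction with
      | mem u hu =>
        obtain ⟨x, y, rfl⟩ := hu
        rw [hedef, hb21, hg0, hg0, map_add, d2, d2, add_zero]
      | zero => simp
      | add u v _ _ hu hv => simp only [map_add, LinearMap.add_apply, hu, hv, add_zero]
      | smul a u _ hu => simp only [map_smul, LinearMap.smul_apply, hu, smul_zero]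
    have step : ∀ x y : L, ∀ v ∈ Submodule.span K
        {u : ExteriorAlgebra K (L × R) | ∃ x y : L, u = I (x, (0 : R)) * I (y, (0 : R))},
        d (Sch (I (x, (0 : R)) * I (y, (0 : R))) v) = 0 := by
      intro x y v hv
      induction hv using Submodule.span_induction with
      | mem v hv =>
        obtain ⟨z, w, rfl⟩ := hv
        rw [hb22, hg0, hg0, hg0, hg0, map_add, map_sub, map_sub, d3, d3, d3, d3]
        simp
      | zero => simp
      | add u v _ _ hu hv => simp only [map_add, hu, hv, add_zero]
      | smul a u _ hu => simp only [map_smul, hu, smul_zero]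
    have dA : d (Sch Λ₀ Λ₀) = 0 := by
      have : ∀ u ∈ Submodule.span K
          {u : ExteriorAlgebra K (L × R) | ∃ x y : L, u = I (x, (0 : R)) * I (y, (0 : R))},
          d (Sch u Λ₀) = 0 := by
        intro u hu
        induction hu using Submodule.span_induction with
        | mem u hu => obtain ⟨x, y, rfl⟩ := hu; exact step x y Λ₀ hΛ₀
        | zero => simp
        | add u v _ _ hu hv =>
          simp only [map_add, LinearMap.add_apply, hu, hv, add_zero]
        | smul a u _ hu => simp only [map_smul, LinearMap.smul_apply, hu, smul_zero]
      exact this Λ₀ hΛ₀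
    have hdcB : d (c * Sch Λ₀ e) = Sch Λ₀ e := by
      rw [hcdef, dmul, hφc, one_smul, dB Λ₀ hΛ₀]
      simp
    have hd := congrArg d h
    rw [map_sub, map_smul, dA, hdcB, map_zero, zero_sub, neg_eq_zero] at hd
    have hB : Sch Λ₀ e = 0 := by
      rcases smul_eq_zero.mp hd with h' | h'
      · exact absurd h' two_ne_zero
      · exact h'
    refine ⟨?_, hB⟩
    rw [hB] at h
    simpa using h
  · rintro ⟨hA, hB⟩
    rw [hA, hB]
    simp
end

section
/- An affine skew-symmetric bracket {·,·} : Sec(Z) × Sec(Z) → C∞(M) on sections of an AV-bundle Z over M is uniquely determined by the affine–linear parts of the operators {σ, ·}: one has {σ, σ′} = {σ, σ′ − σ}²_v, where {σ, ·}²_v : C∞(M) → C∞(M) is the linear part of the affine map {σ, ·}; moreover, after identifying Sec(Z) with C∞(M) via a chosen section σ₀, every aff-Jacobi bracket takes the form {σ, σ′} = D(σ′ − σ) + {σ, σ′}_v, where {·,·}_v is a Jacobi bracket on C∞(M) and D is a first-order differential operator which is a derivation of {·,·}_v. -/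
/-- Let `Z` be an AV-bundle over `M`; algebraically, the space of sections
`Sec(Z)` is an affine space `S` modelled on the algebra `R = C∞(M)`.  Let
`b : S × S → R` be an affine skew-symmetric bracket, with `lin σ = {σ, ·}²_v : R → R` the
(ℝ-linear) affine–linear part of `{σ, ·}` (so `{σ, f +ᵥ σ′} = {σ, σ′} + lin σ f`).  Then:

(1) `b` is uniquely determined by these linear parts: `{σ, σ′} = {σ, σ′ − σ}²_v`;

(2) if moreover `b` is an aff-Jacobi bracket (the Jacobi identity holds for the
affine–linear parts and each `lin σ` is a first-order differential operator), then after
identifying `Sec(Z) ≅ C∞(M)` via any chosen section `σ₀`, the bracket takes the form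
`{σ, σ′} = D(σ′ − σ) + {σ, σ′}_v`, where `{·,·}_v` is a Jacobi bracket on `C∞(M)`
(bilinear, skew-symmetric, Jacobi, first-order bidifferential) and `D` is a first-order
differential operator which is a derivation of `{·,·}_v`. -/
theorem stmt_19 {R S : Type*} [CommRing R] [Algebra ℝ R] [AddTorsor R S]
    (b : S → S → R) (lin : S → (R →ₗ[ℝ] R))
    (hskew : ∀ σ σ' : S, b σ σ' = -b σ' σ)
    (hlin : ∀ (σ σ' : S) (f : R), b σ (f +ᵥ σ') = b σ σ' + lin σ f) :
    (∀ σ σ' : S, b σ σ' = lin σ (σ' -ᵥ σ)) ∧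
    ((∀ σ₁ σ₂ σ₃ : S,
        lin σ₁ (b σ₂ σ₃) + lin σ₂ (b σ₃ σ₁) + lin σ₃ (b σ₁ σ₂) = 0) →
     (∀ (σ : S) (f g x : R),
        lin σ (f * g * x) = f * lin σ (g * x) + g * lin σ (f * x) - f * g * lin σ x) →
     ∀ σ₀ : S, ∃ (D : R →ₗ[ℝ] R) (Jv : R →ₗ[ℝ] R →ₗ[ℝ] R),
       (∀ σ σ' : S, b σ σ' = D (σ' -ᵥ σ) + Jv (σ -ᵥ σ₀) (σ' -ᵥ σ₀)) ∧
       (∀ f g : R, Jv f g = -Jv g f) ∧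
       (∀ f g h : R, Jv f (Jv g h) + Jv g (Jv h f) + Jv h (Jv f g) = 0) ∧
       (∀ f g h : R, Jv (f * g) h = f * Jv g h + g * Jv f h - f * g * Jv 1 h) ∧
       (∀ f g : R, D (f * g) = f * D g + g * D f - f * g * D 1) ∧
       (∀ f g : R, D (Jv f g) = Jv (D f) g + Jv f (D g))) := by
  have h0 : ∀ σ : S, b σ σ = 0 := by
    intro σ
    have h := hskew σ σ
    have h' : b σ σ + b σ σ = 0 := by linear_combination h
    have h2 : b σ σ = ((2:ℝ)⁻¹ * 2) • b σ σ := by norm_num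
    rw [h2, mul_smul, two_smul, h', smul_zero]
  have part1 : ∀ σ σ' : S, b σ σ' = lin σ (σ' -ᵥ σ) := by
    intro σ σ'
    have h := hlin σ σ (σ' -ᵥ σ)
    rw [vsub_vadd] at h
    rw [h, h0, zero_add]
  refine ⟨part1, ?_⟩
  intro hJac hfo σ₀
  -- b as function of first argument
  have hlin' : ∀ (σ τ : S) (f : R), b (f +ᵥ σ) τ = b σ τ - lin τ f := by
    intro σ τ f
    rw [hskew (f +ᵥ σ) τ, hlin τ σ f, hskew τ σ]; ring
  have hlinr : ∀ (ρ σ' : S) (g : R), lin ρ g = b ρ (g +ᵥ σ') - b ρ σ' := by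
    intro ρ σ' g; rw [hlin]; ring
  have Fkey : ∀ (σ σ' : S) (f g : R),
      lin (f +ᵥ σ) g = lin σ g - lin (g +ᵥ σ') f + lin σ' f := by
    intro σ σ' f g
    rw [hlinr (f +ᵥ σ) σ' g, hlin' σ (g +ᵥ σ') f, hlin' σ σ' f, hlinr σ σ' g]
    ring
  -- the raw bilinear candidate
  have hJskew : ∀ f g : R,
      lin (f +ᵥ σ₀) g - lin σ₀ g = -(lin (g +ᵥ σ₀) f - lin σ₀ f) := by
    intro f g
    linear_combination Fkey σ₀ σ₀ f g
  have hJadd1 : ∀ f f' g : R,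
      lin ((f + f') +ᵥ σ₀) g - lin σ₀ g
        = (lin (f +ᵥ σ₀) g - lin σ₀ g) + (lin (f' +ᵥ σ₀) g - lin σ₀ g) := by
    intro f f' g
    rw [add_vadd]
    linear_combination Fkey (f' +ᵥ σ₀) σ₀ f g - Fkey σ₀ σ₀ f g
  have hJsmul1 : ∀ (c : ℝ) (f g : R),
      lin ((c • f) +ᵥ σ₀) g - lin σ₀ g = c • (lin (f +ᵥ σ₀) g - lin σ₀ g) := by
    intro c f g
    rw [hJskew (c • f) g, map_smul, map_smul, hJskew f g]
    module
  set Jv : R →ₗ[ℝ] R →ₗ[ℝ] R :=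
    LinearMap.mk₂ ℝ (fun f g => lin (f +ᵥ σ₀) g - lin σ₀ g)
      (fun f f' g => hJadd1 f f' g)
      (fun c f g => hJsmul1 c f g)
      (fun f g g' => by simp only [map_add]; ring)
      (fun c f g => by simp only [map_smul]; module) with hJvdef
  have hJv : ∀ f g : R, Jv f g = lin (f +ᵥ σ₀) g - lin σ₀ g := fun f g => rfl
  have hJvskew : ∀ f g : R, Jv f g = -Jv g f := by
    intro f g; rw [hJv, hJv]; exact hJskew f g
  have hneg : ∀ g : R, σ₀ -ᵥ (g +ᵥ σ₀) = -g := by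
    intro g; rw [vsub_vadd_eq_vsub_sub, vsub_self, zero_sub]
  have linff : ∀ f : R, lin (f +ᵥ σ₀) f = lin σ₀ f := by
    intro f
    have h2 := part1 (f +ᵥ σ₀) σ₀
    rw [hneg, map_neg] at h2
    have h3 := hlin σ₀ σ₀ f
    rw [h0, zero_add] at h3
    have h4 := hskew (f +ᵥ σ₀) σ₀
    linear_combination h2 - h4 + h3
  have hform : ∀ σ σ' : S,
      b σ σ' = lin σ₀ (σ' -ᵥ σ) + Jv (σ -ᵥ σ₀) (σ' -ᵥ σ₀) := by
    intro σ σ'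
    obtain ⟨f, rfl⟩ : ∃ f : R, σ = f +ᵥ σ₀ := ⟨σ -ᵥ σ₀, (vsub_vadd σ σ₀).symm⟩
    obtain ⟨g, rfl⟩ : ∃ g : R, σ' = g +ᵥ σ₀ := ⟨σ' -ᵥ σ₀, (vsub_vadd σ' σ₀).symm⟩
    rw [part1, vadd_vsub_vadd_cancel_right, vadd_vsub, vadd_vsub, hJv,
      map_sub, map_sub, linff f]
    ring
  have hlin₀ : ∀ f x : R, lin (f +ᵥ σ₀) x = Jv f x + lin σ₀ x := by
    intro f x; rw [hJv]; ring
  have hDer : ∀ f g : R,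
      lin σ₀ (Jv f g) = Jv (lin σ₀ f) g + Jv f (lin σ₀ g) := by
    intro f g
    have H := hJac σ₀ (f +ᵥ σ₀) (g +ᵥ σ₀)
    rw [hform (f +ᵥ σ₀) (g +ᵥ σ₀), hform (g +ᵥ σ₀) σ₀, hform σ₀ (f +ᵥ σ₀)] at H
    simp only [vadd_vsub, vsub_self, hneg, vadd_vsub_vadd_cancel_right, map_zero,
      LinearMap.zero_apply, add_zero, map_neg, map_sub, map_add, hlin₀,
      LinearMap.add_apply, LinearMap.neg_apply, LinearMap.sub_apply] at H
    linear_combination H - hJvskew g (lin σ₀ f)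
  have hJJ : ∀ f g h : R,
      Jv f (Jv g h) + Jv g (Jv h f) + Jv h (Jv f g) = 0 := by
    intro f g h
    have H := hJac (f +ᵥ σ₀) (g +ᵥ σ₀) (h +ᵥ σ₀)
    rw [hform (g +ᵥ σ₀) (h +ᵥ σ₀), hform (h +ᵥ σ₀) (f +ᵥ σ₀),
      hform (f +ᵥ σ₀) (g +ᵥ σ₀)] at H
    simp only [vadd_vsub, vadd_vsub_vadd_cancel_right, map_sub, map_add, hlin₀,
      LinearMap.add_apply, LinearMap.sub_apply] at H
    linear_combination H - hDer g h - hDer h f - hDer f g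
      - hJvskew (lin σ₀ h) f - hJvskew (lin σ₀ g) h - hJvskew (lin σ₀ f) g
  have hJfo : ∀ f g h : R,
      Jv (f * g) h = f * Jv g h + g * Jv f h - f * g * Jv 1 h := by
    intro f g h
    rw [hJvskew (f * g) h, hJvskew g h, hJvskew f h, hJvskew 1 h]
    simp only [hJv]
    have h1 := hfo (h +ᵥ σ₀) f g 1
    have h2 := hfo σ₀ f g 1
    simp only [mul_one] at h1 h2
    linear_combination -h1 + h2
  have hDfo : ∀ f g : R,
      lin σ₀ (f * g) = f * lin σ₀ g + g * lin σ₀ f - f * g * lin σ₀ 1 := by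
    intro f g
    have h2 := hfo σ₀ f g 1
    simp only [mul_one] at h2
    exact h2
  exact ⟨lin σ₀, Jv, hform, hJvskew, hJJ, hJfo, hDfo, hDer⟩
end
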